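/- (Factorization of the pretraining task posterior; used in the proof of Theorem 1.) Suppose the event (s_query, D, ξ_h) has positive probability under the pretraining joint P_pre. Then the conditional distribution over tasks satisfies, for every τ ∈ T, P_pre(τ | s_query, D, ξ_h) = w(τ | D) W_h(τ) / Σ_{τ'} w(τ' | D) W_h(τ'); in particular it does not depend on the query state s_query, on D_query, on 𝔖_h, or on the compliant rule g. Consequently the conditional distribution of the optimal-action label equals the DPT conditional: P_pre(a* | s_query, D, ξ_h) = (Σ_τ w(τ | D) W_h(τ) π*_τ(a* | s_query)) / (Σ_τ w(τ | D) W_h(τ)) = M(a* | s_query, D, ξ_h). -/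

import Mathlib

open scoped BigOperators ENNReal NNReal

/-- An in-context dataset entry `(s, a, s', r)`. -/
abbrev Entry (S A Rw : Type*) := S × A × S × Rw

variable {T S A Rw : Type*}

/-- Environment likelihood `L_τ(D) = ∏ᵢ P_τ(s'ᵢ | sᵢ, aᵢ) · R_τ(rᵢ | sᵢ, aᵢ)`. -/
noncomputable def envLik (Pk : T → S → A → PMF S) (Rk : T → S → A → PMF Rw)
    (τ : T) (D : List (Entry S A Rw)) : ℝ :=
  (D.map fun e => (Pk τ e.1 e.2.1 e.2.2.1).toReal * (Rk τ e.1 e.2.1 e.2.2.2).toReal).prod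

/-- Posterior-sampling posterior `w(τ | D)` (with the convention `x / 0 = 0`). -/
noncomputable def psPost [Fintype T] (Pk : T → S → A → PMF S) (Rk : T → S → A → PMF Rw)
    (prior : PMF T) (D : List (Entry S A Rw)) (τ : T) : ℝ :=
  (prior τ).toReal * envLik Pk Rk τ D /
    ∑ τ' : T, (prior τ').toReal * envLik Pk Rk τ' D

/-- Prefix weight `W_h(τ) = ∏ᵢ π*_τ(aᵢ | sᵢ)` of a history `ξ_h` (equal to `1` if `h = 0`). -/
noncomputable def histW (πs : T → S → PMF A) (τ : T) (ξ : List (S × A)) : ℝ :=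
  (ξ.map fun p => (πs τ p.1 p.2).toReal).prod

/-- DPT conditional action distribution `M(a | s, D, ξ)` (with `x / 0 = 0`). -/
noncomputable def dptM [Fintype T] (Pk : T → S → A → PMF S) (Rk : T → S → A → PMF Rw)
    (πs : T → S → PMF A) (prior : PMF T)
    (D : List (Entry S A Rw)) (ξ : List (S × A)) (s : S) (a : A) : ℝ :=
  (∑ τ : T, psPost Pk Rk prior D τ * histW πs τ ξ * (πs τ s a).toReal) /
    (∑ τ : T, psPost Pk Rk prior D τ * histW πs τ ξ)

/-- Dataset likelihood induced by a compliant dataset-generation rule `g`: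
`D^g(D; τ) = ∏ᵢ g(sᵢ, aᵢ | D_{i-1}) · P_τ(s'ᵢ | sᵢ, aᵢ) · R_τ(rᵢ | sᵢ, aᵢ)`. -/
noncomputable def gLik (Pk : T → S → A → PMF S) (Rk : T → S → A → PMF Rw)
    (g : List (Entry S A Rw) → PMF (S × A)) (τ : T) (D : List (Entry S A Rw)) : ℝ :=
  ∏ i : Fin D.length,
    ((g (D.take i) ((D.get i).1, (D.get i).2.1)).toReal *
      ((Pk τ (D.get i).1 (D.get i).2.1 (D.get i).2.2.1).toReal *
        (Rk τ (D.get i).1 (D.get i).2.1 (D.get i).2.2.2).toReal))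

/-- Pretraining joint distribution
`P_pre(τ, a*, s_query, D, ξ_h) = λ(τ) · D^g(D;τ) · D_query(s_query) · 𝔖_h(s_{1:h})
  · π*_τ(a*|s_query) · ∏ᵢ π*_τ(aᵢ|sᵢ)`,
where `SSeq h` is the state-sequence distribution `𝔖_h` on sequences of length `h`. -/
noncomputable def preJoint [Fintype T] (Pk : T → S → A → PMF S) (Rk : T → S → A → PMF Rw)
    (πs : T → S → PMF A) (prior : PMF T)
    (g : List (Entry S A Rw) → PMF (S × A)) (Dq : PMF S) (SSeq : ℕ → List S → ℝ≥0∞)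
    (τ : T) (astar : A) (squery : S) (D : List (Entry S A Rw)) (ξ : List (S × A)) : ℝ :=
  (prior τ).toReal * gLik Pk Rk g τ D * (Dq squery).toReal *
    (SSeq ξ.length (ξ.map Prod.fst)).toReal * (πs τ squery astar).toReal * histW πs τ ξ

/-!
Under `P_pre` every factor that does not involve the task — the rule's own factors
`g(sᵢ, aᵢ | D_{i-1})`, `D_query(s_query)` and `𝔖_h(s_{1:h})` — is a common constant `K`, and
summing out `a*` removes `π*_τ(· | s_query)`. Both marginals are therefore `K` times the
corresponding expressions in the unnormalized weights `λ(τ) L_τ(D) W_h(τ)`, while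
`w(τ | D) W_h(τ)` is that weight divided by the evidence `Σ_τ λ(τ) L_τ(D)`. Positivity of the
event makes `K` and the evidence nonzero, so both constants cancel from the ratios.
-/

theorem PMF.sum_toReal_eq_one {α : Type*} [Fintype α] (p : PMF α) : ∑ a, (p a).toReal = 1 := by
  rw [← ENNReal.toReal_sum fun a _ => p.apply_ne_top a,
    ← tsum_fintype (L := SummationFilter.unconditional _), p.tsum_coe, ENNReal.toReal_one]

section Pretraining

variable (Pk : T → S → A → PMF S) (Rk : T → S → A → PMF Rw) (πs : T → S → PMF A)
  (prior : PMF T) (g : List (Entry S A Rw) → PMF (S × A)) (Dq : PMF S)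
  (SSeq : ℕ → List S → ℝ≥0∞) (D : List (Entry S A Rw)) (ξ : List (S × A))

noncomputable def ruleLik : ℝ :=
  ∏ i : Fin D.length, (g (D.take i) ((D.get i).1, (D.get i).2.1)).toReal

noncomputable def evidence [Fintype T] : ℝ :=
  ∑ τ : T, (prior τ).toReal * envLik Pk Rk τ D

noncomputable def postWeight (τ : T) : ℝ :=
  (prior τ).toReal * envLik Pk Rk τ D * histW πs τ ξ

theorem envLik_nonneg (τ : T) : 0 ≤ envLik Pk Rk τ D :=
  List.prod_nonneg fun _ hx => by
    obtain ⟨e, -, rfl⟩ := List.mem_map.mp hx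
    positivity

theorem gLik_eq_ruleLik_mul_envLik (τ : T) :
    gLik Pk Rk g τ D = ruleLik g D * envLik Pk Rk τ D := by
  rw [gLik, Finset.prod_mul_distrib, ruleLik, envLik]
  congr 1
  exact Fin.prod_univ_fun_getElem D fun e =>
    (Pk τ e.1 e.2.1 e.2.2.1).toReal * (Rk τ e.1 e.2.1 e.2.2.2).toReal

theorem preJoint_eq [Fintype T] (τ : T) (a : A) (s : S) :
    preJoint Pk Rk πs prior g Dq SSeq τ a s D ξ =
      ruleLik g D * (Dq s).toReal * (SSeq ξ.length (ξ.map Prod.fst)).toReal *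
        postWeight Pk Rk πs prior D ξ τ * (πs τ s a).toReal := by
  rw [preJoint, gLik_eq_ruleLik_mul_envLik, postWeight]
  ring

theorem sum_preJoint_action [Fintype T] [Fintype A] (τ : T) (s : S) :
    ∑ a : A, preJoint Pk Rk πs prior g Dq SSeq τ a s D ξ =
      ruleLik g D * (Dq s).toReal * (SSeq ξ.length (ξ.map Prod.fst)).toReal *
        postWeight Pk Rk πs prior D ξ τ := by
  simp_rw [preJoint_eq, ← Finset.mul_sum, PMF.sum_toReal_eq_one, mul_one]

theorem sum_preJoint_task [Fintype T] (a : A) (s : S) :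
    ∑ τ : T, preJoint Pk Rk πs prior g Dq SSeq τ a s D ξ =
      ruleLik g D * (Dq s).toReal * (SSeq ξ.length (ξ.map Prod.fst)).toReal *
        ∑ τ : T, postWeight Pk Rk πs prior D ξ τ * (πs τ s a).toReal := by
  simp_rw [preJoint_eq, Finset.mul_sum, mul_assoc]

theorem psPost_mul_histW [Fintype T] (τ : T) :
    psPost Pk Rk prior D τ * histW πs τ ξ =
      postWeight Pk Rk πs prior D ξ τ / evidence Pk Rk prior D := by
  rw [psPost, postWeight, evidence]
  ring

theorem evidence_ne_zero [Fintype T] (h : ∑ τ : T, postWeight Pk Rk πs prior D ξ τ ≠ 0) :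
    evidence Pk Rk prior D ≠ 0 := by
  contrapose! h
  have hzero := (Finset.sum_eq_zero_iff_of_nonneg fun τ _ =>
    mul_nonneg ENNReal.toReal_nonneg (envLik_nonneg Pk Rk D τ)).mp h
  exact Finset.sum_eq_zero fun τ hτ => by rw [postWeight, hzero τ hτ, zero_mul]

end Pretraining

theorem pretraining_posterior_factorization_general
    [Fintype T] [Fintype A]
    (Pk : T → S → A → PMF S) (Rk : T → S → A → PMF Rw) (πs : T → S → PMF A)
    (prior : PMF T)
    (g : List (Entry S A Rw) → PMF (S × A))
    (Dq : PMF S)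
    (SSeq : ℕ → List S → ℝ≥0∞)
    (squery : S) (D : List (Entry S A Rw)) (ξ : List (S × A))
    (hpos : 0 < ∑ τ : T, ∑ a : A, preJoint Pk Rk πs prior g Dq SSeq τ a squery D ξ) :
    (∀ τ : T,
      (∑ a : A, preJoint Pk Rk πs prior g Dq SSeq τ a squery D ξ) /
          (∑ τ' : T, ∑ a : A, preJoint Pk Rk πs prior g Dq SSeq τ' a squery D ξ) =
        psPost Pk Rk prior D τ * histW πs τ ξ /
          (∑ τ' : T, psPost Pk Rk prior D τ' * histW πs τ' ξ)) ∧
    (∀ astar : A,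
      (∑ τ : T, preJoint Pk Rk πs prior g Dq SSeq τ astar squery D ξ) /
          (∑ τ' : T, ∑ a : A, preJoint Pk Rk πs prior g Dq SSeq τ' a squery D ξ) =
        dptM Pk Rk πs prior D ξ squery astar) := by
  set K := ruleLik g D * (Dq squery).toReal * (SSeq ξ.length (ξ.map Prod.fst)).toReal
  have htotal : ∑ τ : T, ∑ a : A, preJoint Pk Rk πs prior g Dq SSeq τ a squery D ξ =
      K * ∑ τ : T, postWeight Pk Rk πs prior D ξ τ := by
    rw [Finset.mul_sum]
    exact Finset.sum_congr rfl fun τ _ =>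
      sum_preJoint_action Pk Rk πs prior g Dq SSeq D ξ τ squery
  rw [htotal] at hpos ⊢
  have hK : K ≠ 0 := left_ne_zero_of_mul hpos.ne'
  have hZ := evidence_ne_zero Pk Rk πs prior D ξ (right_ne_zero_of_mul hpos.ne')
  simp_rw [psPost_mul_histW, ← Finset.sum_div]
  refine ⟨fun τ => ?_, fun astar => ?_⟩
  · rw [sum_preJoint_action, mul_div_mul_left _ _ hK, div_div_div_cancel_right₀ hZ]
  · rw [sum_preJoint_task, dptM]
    simp_rw [psPost_mul_histW, div_mul_eq_mul_div, ← Finset.sum_div]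
    rw [mul_div_mul_left _ _ hK, div_div_div_cancel_right₀ hZ]

/-- **Factorization of the pretraining task posterior** (used in the proof of Theorem 1).
If the event `(s_query, D, ξ_h)` has positive probability under the pretraining joint
`P_pre`, then for every `τ`,
`P_pre(τ | s_query, D, ξ_h) = w(τ|D) W_h(τ) / Σ_{τ'} w(τ'|D) W_h(τ')`
(in particular independent of `s_query`, `D_query`, `𝔖_h`, and the compliant rule `g`),
and consequently the conditional distribution of the optimal-action label equals the DPT
conditional: `P_pre(a* | s_query, D, ξ_h) = M(a* | s_query, D, ξ_h)`. -/
theorem pretraining_posterior_factorization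
    [Fintype T] [Nonempty T] [Fintype S] [Nonempty S] [Fintype A] [Nonempty A]
    [Fintype Rw] [Nonempty Rw]
    (Pk : T → S → A → PMF S) (Rk : T → S → A → PMF Rw) (πs : T → S → PMF A)
    (prior : PMF T)
    (g : List (Entry S A Rw) → PMF (S × A))
    (Dq : PMF S) (hDq : ∀ s : S, Dq s ≠ 0)
    (SSeq : ℕ → List S → ℝ≥0∞)
    (hSpos : ∀ (h : ℕ) (l : List S), l.length = h → SSeq h l ≠ 0)
    (hSnorm : ∀ h : ℕ, ∑' l : {l : List S // l.length = h}, SSeq h l.val = 1)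
    (squery : S) (D : List (Entry S A Rw)) (ξ : List (S × A))
    (hpos : 0 < ∑ τ : T, ∑ a : A, preJoint Pk Rk πs prior g Dq SSeq τ a squery D ξ) :
    (∀ τ : T,
      (∑ a : A, preJoint Pk Rk πs prior g Dq SSeq τ a squery D ξ) /
          (∑ τ' : T, ∑ a : A, preJoint Pk Rk πs prior g Dq SSeq τ' a squery D ξ) =
        psPost Pk Rk prior D τ * histW πs τ ξ /
          (∑ τ' : T, psPost Pk Rk prior D τ' * histW πs τ' ξ)) ∧
    (∀ astar : A,
      (∑ τ : T, preJoint Pk Rk πs prior g Dq SSeq τ astar squery D ξ) /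
          (∑ τ' : T, ∑ a : A, preJoint Pk Rk πs prior g Dq SSeq τ' a squery D ξ) =
        dptM Pk Rk πs prior D ξ squery astar) :=
  pretraining_posterior_factorization_general Pk Rk πs prior g Dq SSeq squery D ξ hpos
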